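/- arXiv:1803.06755 — 3 statements merged into one kernel-verified Lean document; each statement's English description precedes it below -/
import Mathlib

section
/- Let (A, D, χ) be an abelian category with exact duality. Suppose γ : c → Dc is a symmetric form, j : b ↪ c is a subobject with restricted form β = Dj ∘ γ ∘ j, and i : a ↪ b is a subobject with Di ∘ β ∘ i = 0 (so a is isotropic for both β and γ). Then there is a monomorphism j/a : a^⊥_β / a → a^⊥_γ / a between the isotropic reductions' underlying objects such that the reduction of the restriction equals the restriction of the reduction: (γ|_j)/a = (γ/a)|_{j/a}. -/
open CategoryTheory CategoryTheory.Limits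

universe v u v₁ u₁ v₂ u₂ v₃ u₃

/-- A (contravariant) duality on a preadditive category: a triple `(D, χ)` where `D` is an
additive contravariant endofunctor and `χ : id → D ∘ D^op` is a natural isomorphism such that
`D χ_a ∘ χ_{D a} = id`. -/
structure PreDuality (A : Type u) [Category.{v} A] [Preadditive A] where
  obj : A → A
  map : ∀ {X Y : A}, (X ⟶ Y) → (obj Y ⟶ obj X)
  map_id : ∀ X : A, map (𝟙 X) = 𝟙 (obj X)
  map_comp : ∀ {X Y Z : A} (f : X ⟶ Y) (g : Y ⟶ Z), map (f ≫ g) = map g ≫ map f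
  map_add : ∀ {X Y : A} (f g : X ⟶ Y), map (f + g) = map f + map g
  χ : ∀ X : A, X ⟶ obj (obj X)
  χ_iso : ∀ X : A, IsIso (χ X)
  χ_natural : ∀ {X Y : A} (f : X ⟶ Y), f ≫ χ Y = χ X ≫ map (map f)
  triangle : ∀ X : A, χ (obj X) ≫ map (χ X) = 𝟙 (obj X)

namespace PreDuality

variable {A : Type u} [Category.{v} A] [Preadditive A] (𝒟 : PreDuality A)

lemma map_zero (X Y : A) : 𝒟.map (0 : X ⟶ Y) = 0 := by
  have h := 𝒟.map_add (0 : X ⟶ Y) 0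
  rw [add_zero] at h
  exact (add_eq_left).mp h.symm

lemma map_neg {X Y : A} (f : X ⟶ Y) : 𝒟.map (-f) = -𝒟.map f := by
  have h := 𝒟.map_add f (-f)
  rw [add_neg_cancel, 𝒟.map_zero] at h
  exact eq_neg_of_add_eq_zero_right h.symm

/-- The "opposite-sign" duality `(D, -χ)`; its symmetric forms are the antisymmetric forms
for `(D, χ)`. -/
def neg : PreDuality A where
  obj := 𝒟.obj
  map := 𝒟.map
  map_id := 𝒟.map_id
  map_comp := 𝒟.map_comp
  map_add := 𝒟.map_add
  χ X := -𝒟.χ X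
  χ_iso X := by
    have := 𝒟.χ_iso X
    exact ⟨⟨-(inv (𝒟.χ X)), by simp, by simp⟩⟩
  χ_natural f := by
    rw [Preadditive.comp_neg, Preadditive.neg_comp, 𝒟.χ_natural]
  triangle X := by
    try dsimp only
    rw [𝒟.map_neg, Preadditive.neg_comp, Preadditive.comp_neg, neg_neg, 𝒟.triangle]

end PreDuality

section Forms

variable {A : Type u} [Category.{v} A] [Preadditive A]

/-- A symmetric bilinear form in a category with duality: a morphism `β : b ⟶ D b`
with `β = D β ∘ χ_b`.  (Antisymmetric forms are symmetric forms for `𝒟.neg`.) -/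
structure SymmForm (𝒟 : PreDuality A) where
  carrier : A
  form : carrier ⟶ 𝒟.obj carrier
  symm : form = 𝒟.χ carrier ≫ 𝒟.map form

namespace SymmForm

variable {𝒟 : PreDuality A}

/-- A form is non-degenerate if the underlying morphism is an isomorphism. -/
def Nondeg (β : SymmForm 𝒟) : Prop := IsIso β.form

/-- The restriction `β|_f = D f ∘ β ∘ f` of a symmetric form along a morphism `f`. -/
def restrict (β : SymmForm 𝒟) {a : A} (f : a ⟶ β.carrier) : SymmForm 𝒟 where
  carrier := a
  form := f ≫ β.form ≫ 𝒟.map f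
  symm := by
    have h : 𝒟.map (f ≫ β.form ≫ 𝒟.map f)
        = 𝒟.map (𝒟.map f) ≫ 𝒟.map β.form ≫ 𝒟.map f := by
      rw [𝒟.map_comp, 𝒟.map_comp, Category.assoc]
    rw [h, ← Category.assoc (𝒟.χ a), ← 𝒟.χ_natural f, Category.assoc,
      ← Category.assoc (𝒟.χ β.carrier), ← β.symm]

lemma restrict_symm (β : SymmForm 𝒟) {a : A} (f : a ⟶ β.carrier) :
    f ≫ β.form ≫ 𝒟.map f = 𝒟.χ a ≫ 𝒟.map (f ≫ β.form ≫ 𝒟.map f) :=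
  (β.restrict f).symm

/-- Orthogonal direct sum of symmetric forms. -/
noncomputable def orthSum [HasBinaryBiproducts A] (β₁ β₂ : SymmForm 𝒟) : SymmForm 𝒟 where
  carrier := β₁.carrier ⊞ β₂.carrier
  form := biprod.desc (β₁.form ≫ 𝒟.map biprod.fst) (β₂.form ≫ 𝒟.map biprod.snd)
  symm := by
    apply biprod.hom_ext'
    · rw [biprod.inl_desc]
      have h1 : biprod.inl ≫ 𝒟.χ (β₁.carrier ⊞ β₂.carrier)
          = 𝒟.χ β₁.carrier ≫ 𝒟.map (𝒟.map (biprod.inl : β₁.carrier ⟶ _)) :=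
        𝒟.χ_natural _
      rw [← Category.assoc, h1, Category.assoc, ← 𝒟.map_comp]
      have h2 : biprod.desc (β₁.form ≫ 𝒟.map biprod.fst) (β₂.form ≫ 𝒟.map biprod.snd) ≫
          𝒟.map (biprod.inl : β₁.carrier ⟶ _) = biprod.fst ≫ β₁.form := by
        apply biprod.hom_ext'
        · rw [← Category.assoc, biprod.inl_desc, Category.assoc, ← 𝒟.map_comp,
            biprod.inl_fst, 𝒟.map_id, Category.comp_id, ← Category.assoc, biprod.inl_fst,
            Category.id_comp]
        · rw [← Category.assoc, biprod.inr_desc, Category.assoc, ← 𝒟.map_comp,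
            biprod.inl_snd, 𝒟.map_zero, Limits.comp_zero, ← Category.assoc, biprod.inr_fst,
            Limits.zero_comp]
      rw [h2, 𝒟.map_comp, ← Category.assoc, ← β₁.symm]
    · rw [biprod.inr_desc]
      have h1 : biprod.inr ≫ 𝒟.χ (β₁.carrier ⊞ β₂.carrier)
          = 𝒟.χ β₂.carrier ≫ 𝒟.map (𝒟.map (biprod.inr : β₂.carrier ⟶ _)) :=
        𝒟.χ_natural _
      rw [← Category.assoc, h1, Category.assoc, ← 𝒟.map_comp]
      have h2 : biprod.desc (β₁.form ≫ 𝒟.map biprod.fst) (β₂.form ≫ 𝒟.map biprod.snd) ≫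
          𝒟.map (biprod.inr : β₂.carrier ⟶ _) = biprod.snd ≫ β₂.form := by
        apply biprod.hom_ext'
        · rw [← Category.assoc, biprod.inl_desc, Category.assoc, ← 𝒟.map_comp,
            biprod.inr_fst, 𝒟.map_zero, Limits.comp_zero, ← Category.assoc, biprod.inl_snd,
            Limits.zero_comp]
        · rw [← Category.assoc, biprod.inr_desc, Category.assoc, ← 𝒟.map_comp,
            biprod.inr_snd, 𝒟.map_id, Category.comp_id, ← Category.assoc, biprod.inr_snd,
            Category.id_comp]
      rw [h2, 𝒟.map_comp, ← Category.assoc, ← β₂.symm]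

end SymmForm

/-- Two symmetric forms are isometric if they correspond under an isomorphism of the
underlying objects. -/
def Isometric' {𝒟 : PreDuality A} (α β : SymmForm 𝒟) : Prop :=
  ∃ f : α.carrier ⟶ β.carrier, IsIso f ∧ α.form = f ≫ β.form ≫ 𝒟.map f

/-- A subobject (given by a monomorphism `i`) is isotropic for `β` if `β|_i = 0`. -/
def IsIsotropic {𝒟 : PreDuality A} (β : SymmForm 𝒟) {a : A} (i : a ⟶ β.carrier) : Prop :=
  Mono i ∧ i ≫ β.form ≫ 𝒟.map i = 0

/-- A symmetric form is anisotropic if it has no non-zero isotropic subobject. -/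
def Anisotropic {𝒟 : PreDuality A} (β : SymmForm 𝒟) : Prop :=
  ∀ (a : A) (i : a ⟶ β.carrier), Mono i → i ≫ β.form ≫ 𝒟.map i = 0 → IsZero a

end Forms

section AbelianDuality

variable {A : Type u} [Category.{v} A] [Abelian A]

/-- An exact duality on an abelian category: a duality whose underlying additive
contravariant functor is exact, i.e. takes cokernels to kernels and kernels to cokernels. -/
structure Duality (A : Type u) [Category.{v} A] [Abelian A] extends PreDuality A where
  dualCokernelIsKernel : ∀ {X Y : A} (f : X ⟶ Y),
    IsLimit (KernelFork.ofι (f := toPreDuality.map f) (toPreDuality.map (cokernel.π f))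
      (by rw [← toPreDuality.map_comp, cokernel.condition, toPreDuality.map_zero]))
  dualKernelIsCokernel : ∀ {X Y : A} (f : X ⟶ Y),
    IsColimit (CokernelCofork.ofπ (f := toPreDuality.map f) (toPreDuality.map (kernel.ι f))
      (by rw [← toPreDuality.map_comp, kernel.condition, toPreDuality.map_zero]))

/-- Abbreviation for the underlying duality data. -/
abbrev Duality.P (𝒟 : Duality A) : PreDuality A := 𝒟.toPreDuality

/-- The negative `(D, -χ)` of an exact duality. -/
def Duality.neg (𝒟 : Duality A) : Duality A where
  toPreDuality := 𝒟.toPreDuality.neg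
  dualCokernelIsKernel := 𝒟.dualCokernelIsKernel
  dualKernelIsCokernel := 𝒟.dualKernelIsCokernel

namespace SymmForm

variable {𝒟 : Duality A} (β : SymmForm 𝒟.P) {a : A} (i : a ⟶ β.carrier)
  (hiso : i ≫ β.form ≫ 𝒟.P.map i = 0)

/-- The factorisation of an isotropic `i : a ⟶ b` through the orthogonal complement
`a^⊥ = ker (D i ∘ β)`. -/
noncomputable def perpLift : a ⟶ kernel (β.form ≫ 𝒟.P.map i) :=
  kernel.lift _ i hiso

lemma reduce_h1 :
    perpLift β i hiso ≫ (kernel.ι (β.form ≫ 𝒟.P.map i) ≫ β.form ≫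
      𝒟.P.map (kernel.ι (β.form ≫ 𝒟.P.map i))) = 0 := by
  have hpcι : perpLift β i hiso ≫ kernel.ι (β.form ≫ 𝒟.P.map i) = i := kernel.lift_ι _ _ _
  have e1 : i ≫ β.form = 𝒟.P.χ a ≫ 𝒟.P.map (β.form ≫ 𝒟.P.map i) := by
    conv_lhs => rw [β.symm]
    rw [← Category.assoc, 𝒟.P.χ_natural i, Category.assoc, ← 𝒟.P.map_comp]
  rw [← Category.assoc, hpcι, ← Category.assoc, e1, Category.assoc, ← 𝒟.P.map_comp,
    kernel.condition, 𝒟.P.map_zero, Limits.comp_zero]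

/-- The degenerate form `β` restricted to `a^⊥`, descended to `a^⊥/a`. -/
noncomputable def reducePre :
    cokernel (perpLift β i hiso) ⟶
      𝒟.P.obj (kernel (β.form ≫ 𝒟.P.map i)) :=
  cokernel.desc _ _ (reduce_h1 β i hiso)

lemma perpLift_ι :
    perpLift β i hiso ≫ kernel.ι (β.form ≫ 𝒟.P.map i) = i :=
  kernel.lift_ι _ _ _

lemma reduce_h2 :
    reducePre β i hiso ≫ 𝒟.P.map (perpLift β i hiso) = 0 := by
  rw [← cancel_epi (cokernel.π (perpLift β i hiso)), Limits.comp_zero, ← Category.assoc,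
    reducePre, cokernel.π_desc, Category.assoc, Category.assoc, ← 𝒟.P.map_comp,
    perpLift_ι]
  exact kernel.condition _

/-- Isotropic reduction `β/a` of a symmetric form along an isotropic morphism `i : a ⟶ b`:
the induced symmetric form on `a^⊥/a`, where `a^⊥ = ker (D i ∘ β)`. -/
noncomputable def reduce : SymmForm 𝒟.P where
  carrier := cokernel (perpLift β i hiso)
  form := (KernelFork.IsLimit.lift' (𝒟.dualCokernelIsKernel (perpLift β i hiso))
    (reducePre β i hiso) (reduce_h2 β i hiso)).1
  symm := by
    set φv := (KernelFork.IsLimit.lift' (𝒟.dualCokernelIsKernel (perpLift β i hiso))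
      (reducePre β i hiso) (reduce_h2 β i hiso)).1 with hv
    have hφ : φv ≫ 𝒟.P.map (cokernel.π (perpLift β i hiso)) = reducePre β i hiso :=
      (KernelFork.IsLimit.lift' (𝒟.dualCokernelIsKernel (perpLift β i hiso))
        (reducePre β i hiso) (reduce_h2 β i hiso)).2
    have hπs : cokernel.π (perpLift β i hiso) ≫ reducePre β i hiso
        = kernel.ι (β.form ≫ 𝒟.P.map i) ≫ β.form ≫
            𝒟.P.map (kernel.ι (β.form ≫ 𝒟.P.map i)) :=
      cokernel.π_desc _ _ _
    apply Fork.IsLimit.hom_ext (𝒟.dualCokernelIsKernel (perpLift β i hiso))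
    show φv ≫ 𝒟.P.map (cokernel.π (perpLift β i hiso)) =
        (𝒟.P.χ _ ≫ 𝒟.P.map φv) ≫ 𝒟.P.map (cokernel.π (perpLift β i hiso))
    have key : 𝒟.P.map (𝒟.P.map (cokernel.π (perpLift β i hiso))) ≫ 𝒟.P.map φv ≫
        𝒟.P.map (cokernel.π (perpLift β i hiso))
        = 𝒟.P.map (kernel.ι (β.form ≫ 𝒟.P.map i) ≫ β.form ≫
            𝒟.P.map (kernel.ι (β.form ≫ 𝒟.P.map i))) := by
      rw [← 𝒟.P.map_comp, ← 𝒟.P.map_comp, Category.assoc, hφ, hπs]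
    rw [hφ, ← cancel_epi (cokernel.π (perpLift β i hiso)), hπs, Category.assoc,
      ← Category.assoc (cokernel.π (perpLift β i hiso)) (𝒟.P.χ _),
      𝒟.P.χ_natural (cokernel.π (perpLift β i hiso)), Category.assoc, key]
    exact β.restrict_symm _

/-- Reduction of a symmetric form by the kernel: the induced non-degenerate form on the
image of `β`. -/
noncomputable def reduceKernel : SymmForm 𝒟.P :=
  β.reduce (kernel.ι β.form) (by rw [← Category.assoc, kernel.condition, Limits.zero_comp])

lemma form_comp_map_kernel : β.form ≫ 𝒟.P.map (kernel.ι β.form) = 0 := by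
  have h := congrArg (fun g => 𝒟.P.χ β.carrier ≫ 𝒟.P.map g) (kernel.condition β.form)
  simp only [𝒟.P.map_comp, 𝒟.P.map_zero, Limits.comp_zero] at h
  rw [← Category.assoc, ← β.symm] at h
  exact h

/-- The canonical quotient map `b ⟶ im β` onto (the reduction model of) the image of `β`. -/
noncomputable def kerQuot : β.carrier ⟶ β.reduceKernel.carrier :=
  kernel.lift _ (𝟙 _) (by rw [Category.id_comp]; exact β.form_comp_map_kernel) ≫ cokernel.π _

end SymmForm

end AbelianDuality

section Witt

variable {A : Type u} [Category.{v} A] [Preadditive A]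

/-- A lagrangian of a symmetric form: an isotropic subobject `i : a ⟶ b` such that
`0 ⟶ a ⟶ b ⟶ D a ⟶ 0` (with second map `D i ∘ β`) is short exact. -/
def SymmForm.IsLagrangian [Abelian A] {𝒟 : PreDuality A} (β : SymmForm 𝒟) {a : A}
    (i : a ⟶ β.carrier) : Prop :=
  Mono i ∧ Epi (β.form ≫ 𝒟.map i) ∧
    ∃ w : i ≫ (β.form ≫ 𝒟.map i) = 0,
      (CategoryTheory.ShortComplex.mk i (β.form ≫ 𝒟.map i) w).Exact

/-- A metabolic form: a non-degenerate symmetric form admitting a lagrangian. -/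
def SymmForm.Metabolic [Abelian A] {𝒟 : PreDuality A} (β : SymmForm 𝒟) : Prop :=
  IsIso β.form ∧ ∃ (a : A) (i : a ⟶ β.carrier), β.IsLagrangian i

/-- Witt equivalence with respect to a class `M` of "metabolic" forms: stable isometry. -/
def WittEquivBy [HasBinaryBiproducts A] {𝒟 : PreDuality A} (M : SymmForm 𝒟 → Prop)
    (β₁ β₂ : SymmForm 𝒟) : Prop :=
  ∃ η₁ η₂ : SymmForm 𝒟, M η₁ ∧ M η₂ ∧ Isometric' (β₁.orthSum η₁) (β₂.orthSum η₂)


variable (𝒟 : PreDuality A)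

/-- Non-degenerate symmetric forms with carrier in a given class `P` of objects. -/
abbrev NDForm (P : A → Prop) : Type (max u v) :=
  {β : SymmForm 𝒟 // IsIso β.form ∧ P β.carrier}

/-- The subgroup of relations defining the Witt group: `[β₁ ⊕ β₂] = [β₁] + [β₂]` and
`[η] = 0` for `η` metabolic. -/
def wittRel [HasBinaryBiproducts A] (M : SymmForm 𝒟 → Prop) (P : A → Prop) :
    AddSubgroup (FreeAbelianGroup (NDForm 𝒟 P)) :=
  AddSubgroup.closure
    ({x | ∃ (β₁ β₂ : NDForm 𝒟 P) (h : IsIso (β₁.1.orthSum β₂.1).form)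
        (hP : P (β₁.1.orthSum β₂.1).carrier),
        x = FreeAbelianGroup.of (⟨β₁.1.orthSum β₂.1, h, hP⟩ : NDForm 𝒟 P)
          - FreeAbelianGroup.of β₁ - FreeAbelianGroup.of β₂} ∪
     {x | ∃ (β₁ β₂ : NDForm 𝒟 P), Isometric' β₁.1 β₂.1 ∧
        x = FreeAbelianGroup.of β₁ - FreeAbelianGroup.of β₂} ∪
     {x | ∃ η : NDForm 𝒟 P, M η.1 ∧ x = FreeAbelianGroup.of η})

/-- The Witt group of non-degenerate symmetric forms (with carrier in `P`), modulo metabolic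
forms `M`, presented as the quotient of the free abelian group on non-degenerate symmetric
forms by the sum, isometry and metabolic relations. -/
def WittGroup [HasBinaryBiproducts A] (M : SymmForm 𝒟 → Prop) (P : A → Prop) :
    Type (max u v) :=
  FreeAbelianGroup (NDForm 𝒟 P) ⧸ wittRel 𝒟 M P

noncomputable instance [HasBinaryBiproducts A] (M : SymmForm 𝒟 → Prop) (P : A → Prop) :
    AddCommGroup (WittGroup 𝒟 M P) :=
  inferInstanceAs (AddCommGroup (FreeAbelianGroup (NDForm 𝒟 P) ⧸ wittRel 𝒟 M P))

/-- The Witt class of a non-degenerate symmetric form. -/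
def wittClsP [HasBinaryBiproducts A] (M : SymmForm 𝒟 → Prop) (P : A → Prop)
    (β : SymmForm 𝒟) (h : IsIso β.form) (hP : P β.carrier) : WittGroup 𝒟 M P :=
  QuotientAddGroup.mk (FreeAbelianGroup.of (⟨β, h, hP⟩ : NDForm 𝒟 P))

end Witt

section AWitt

variable {A : Type u} [Category.{v} A] [Abelian A]

/-- Witt equivalence of symmetric forms in an abelian category: stable isometry by
metabolic forms. -/
def WittEquiv {𝒟 : PreDuality A} (β₁ β₂ : SymmForm 𝒟) : Prop :=
  WittEquivBy SymmForm.Metabolic β₁ β₂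

/-- The Witt group `W(𝒜)` of an abelian category with duality. -/
def AWitt (𝒟 : Duality A) : Type (max u v) :=
  WittGroup 𝒟.P SymmForm.Metabolic (fun _ => True)

noncomputable instance (𝒟 : Duality A) : AddCommGroup (AWitt 𝒟) :=
  inferInstanceAs (AddCommGroup (WittGroup 𝒟.P SymmForm.Metabolic (fun _ => True)))

/-- The Witt class `[β] ∈ W(𝒜)` of a non-degenerate symmetric form. -/
def aCls (𝒟 : Duality A) (β : SymmForm 𝒟.P) (h : IsIso β.form) : AWitt 𝒟 :=
  wittClsP 𝒟.P SymmForm.Metabolic (fun _ => True) β h trivial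

/-- The Witt group `W₋(𝒜)` of antisymmetric forms. -/
def AWittNeg (𝒟 : Duality A) : Type (max u v) := AWitt 𝒟.neg

noncomputable instance (𝒟 : Duality A) : AddCommGroup (AWittNeg 𝒟) :=
  inferInstanceAs (AddCommGroup (AWitt 𝒟.neg))

end AWitt

section DualityFunctor

variable {A : Type u} {B : Type u₁} [Category.{v} A] [Category.{v₁} B]
  [Preadditive A] [Preadditive B]

/-- An additive functor commuting with dualities. -/
structure DualityFunctor (𝒟₁ : PreDuality A) (𝒟₂ : PreDuality B) where
  F : A ⥤ B
  additive : F.Additive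
  η : ∀ X : A, F.obj (𝒟₁.obj X) ≅ 𝒟₂.obj (F.obj X)
  η_natural : ∀ {X Y : A} (f : X ⟶ Y),
    F.map (𝒟₁.map f) ≫ (η X).hom = (η Y).hom ≫ 𝒟₂.map (F.map f)
  χ_compat : ∀ X : A,
    F.map (𝒟₁.χ X) ≫ (η (𝒟₁.obj X)).hom ≫ 𝒟₂.map ((η X).inv) = 𝒟₂.χ (F.obj X)

namespace DualityFunctor

variable {𝒟₁ : PreDuality A} {𝒟₂ : PreDuality B} (Φ : DualityFunctor 𝒟₁ 𝒟₂)

/-- The image of a symmetric form under a functor commuting with dualities. -/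
def mapForm (β : SymmForm 𝒟₁) : SymmForm 𝒟₂ where
  carrier := Φ.F.obj β.carrier
  form := Φ.F.map β.form ≫ (Φ.η β.carrier).hom
  symm := by
    have h0 : 𝒟₂.map (Φ.F.map β.form ≫ (Φ.η β.carrier).hom)
        = 𝒟₂.map (Φ.η β.carrier).hom ≫ 𝒟₂.map (Φ.F.map β.form) := 𝒟₂.map_comp _ _
    rw [h0, ← Φ.χ_compat β.carrier, Category.assoc, Category.assoc]
    have h1 : 𝒟₂.map ((Φ.η β.carrier).inv) ≫ 𝒟₂.map ((Φ.η β.carrier).hom) = 𝟙 _ := by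
      rw [← 𝒟₂.map_comp, Iso.hom_inv_id, 𝒟₂.map_id]
    rw [← Category.assoc (𝒟₂.map ((Φ.η β.carrier).inv)), h1, Category.id_comp,
      ← Φ.η_natural β.form, ← Category.assoc, ← Φ.F.map_comp, ← β.symm]

lemma mapForm_nondeg (β : SymmForm 𝒟₁) (h : IsIso β.form) : IsIso (Φ.mapForm β).form := by
  have : IsIso (Φ.F.map β.form) := inferInstance
  show IsIso (Φ.F.map β.form ≫ (Φ.η β.carrier).hom)
  exact IsIso.comp_isIso

end DualityFunctor

end DualityFunctor

section DFMore

variable {A : Type u} {B : Type u₁} {C : Type u₂} [Category.{v} A] [Category.{v₁} B]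
  [Category.{v₂} C] [Preadditive A] [Preadditive B] [Preadditive C]

/-- The identity duality functor. -/
def DualityFunctor.id (𝒟 : PreDuality A) : DualityFunctor 𝒟 𝒟 where
  F := 𝟭 A
  additive := inferInstance
  η X := Iso.refl _
  η_natural f := by simp
  χ_compat X := by simp [𝒟.map_id]

/-- Composition of duality functors. -/
def DualityFunctor.comp {𝒟₁ : PreDuality A} {𝒟₂ : PreDuality B} {𝒟₃ : PreDuality C}
    (Φ : DualityFunctor 𝒟₁ 𝒟₂) (Ψ : DualityFunctor 𝒟₂ 𝒟₃) : DualityFunctor 𝒟₁ 𝒟₃ where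
  F := Φ.F ⋙ Ψ.F
  additive := by
    have := Φ.additive
    have := Ψ.additive
    exact Functor.instAdditiveComp _ _
  η X := Ψ.F.mapIso (Φ.η X) ≪≫ Ψ.η (Φ.F.obj X)
  η_natural {X Y} f := by
    dsimp
    rw [← Category.assoc, ← Ψ.F.map_comp, Φ.η_natural f, Ψ.F.map_comp, Category.assoc,
      Ψ.η_natural (Φ.F.map f), ← Category.assoc]
  χ_compat X := by
    dsimp
    have h1 := Ψ.η_natural ((Φ.η X).inv)
    have h2 : 𝒟₃.map ((Ψ.η (Φ.F.obj X)).inv ≫ Ψ.F.map ((Φ.η X).inv))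
        = 𝒟₃.map (Ψ.F.map ((Φ.η X).inv)) ≫ 𝒟₃.map ((Ψ.η (Φ.F.obj X)).inv) :=
      𝒟₃.map_comp _ _
    rw [h2]
    simp only [Category.assoc]
    rw [← Category.assoc ((Ψ.η (Φ.F.obj (𝒟₁.obj X))).hom), ← h1]
    simp only [Category.assoc]
    slice_lhs 1 3 => rw [← Ψ.F.map_comp, ← Ψ.F.map_comp]
    rw [Φ.χ_compat X]
    simp only [Category.assoc]
    exact Ψ.χ_compat (Φ.F.obj X)

/-- A duality functor between the negated dualities. -/
def DualityFunctor.negD {𝒟₁ : PreDuality A} {𝒟₂ : PreDuality B}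
    (Φ : DualityFunctor 𝒟₁ 𝒟₂) : DualityFunctor 𝒟₁.neg 𝒟₂.neg where
  F := Φ.F
  additive := Φ.additive
  η := Φ.η
  η_natural := Φ.η_natural
  χ_compat X := by
    have := Φ.additive
    show Φ.F.map (-𝒟₁.χ X) ≫ (Φ.η _).hom ≫ 𝒟₂.map ((Φ.η X).inv) = -𝒟₂.χ (Φ.F.obj X)
    rw [Functor.map_neg, Preadditive.neg_comp, Φ.χ_compat X]

end DFMore

section Misc

open ZeroObject

variable {A : Type u} [Category.{v} A] [Abelian A]

/-- The zero form on the zero object. -/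
noncomputable def zeroForm (𝒟 : PreDuality A) : SymmForm 𝒟 where
  carrier := 0
  form := 0
  symm := by rw [𝒟.map_zero, Limits.comp_zero]

/-- Orthogonal direct sum of a finite list of symmetric forms. -/
noncomputable def orthSumList (𝒟 : PreDuality A) (l : List (SymmForm 𝒟)) : SymmForm 𝒟 :=
  l.foldr SymmForm.orthSum (zeroForm 𝒟)

/-- A Serre class in an abelian category: closed under isomorphisms, subobjects, quotients
and extensions, and containing the zero objects. -/
structure SerreClass (A : Type u) [Category.{v} A] [Abelian A] where
  P : A → Prop
  prop_of_iso : ∀ {X Y : A}, (X ≅ Y) → P X → P Y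
  prop_zero : ∀ X : A, IsZero X → P X
  prop_sub : ∀ {X Y : A} (f : X ⟶ Y), Mono f → P Y → P X
  prop_quot : ∀ {X Y : A} (f : X ⟶ Y), Epi f → P X → P Y
  prop_ext : ∀ {X Y Z : A} (f : X ⟶ Y) (g : Y ⟶ Z) (w : f ≫ g = 0), Mono f → Epi g →
    (CategoryTheory.ShortComplex.mk f g w).Exact → P X → P Z → P Y

/-- The smallest Serre class containing a given object `s`: "the full Serre subcategory
`⟨s⟩` generated by `s`". -/
def serreGen (s : A) : A → Prop := fun x => ∀ C : SerreClass A, C.P s → C.P x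

/-- Self-dual simple objects `s ≅ D s`. -/
abbrev SelfDualSimple (𝒟 : Duality A) : Type u :=
  {s : A // Simple s ∧ Nonempty (s ≅ 𝒟.obj s)}

instance sdSetoid (𝒟 : Duality A) : Setoid (SelfDualSimple 𝒟) where
  r s t := Nonempty (s.1 ≅ t.1)
  iseqv := ⟨fun _ => ⟨Iso.refl _⟩, fun ⟨e⟩ => ⟨e.symm⟩, fun ⟨e⟩ ⟨f⟩ => ⟨e.trans f⟩⟩

/-- Isomorphism classes of self-dual simple objects. -/
def SDIndex (𝒟 : Duality A) : Type u := Quotient (sdSetoid 𝒟)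

/-- The Witt group `W(⟨s⟩)` of the full Serre subcategory generated by `s`. -/
def SubWitt (𝒟 : Duality A) (s : A) : Type (max u v) :=
  WittGroup 𝒟.P SymmForm.Metabolic (serreGen s)

noncomputable instance (𝒟 : Duality A) (s : A) : AddCommGroup (SubWitt 𝒟 s) :=
  inferInstanceAs (AddCommGroup (WittGroup 𝒟.P SymmForm.Metabolic (serreGen s)))

/-- The Witt class in `W(⟨s⟩)`. -/
def subCls (𝒟 : Duality A) (s : A) (β : SymmForm 𝒟.P) (h : IsIso β.form)
    (hP : serreGen s β.carrier) : SubWitt 𝒟 s :=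
  wittClsP 𝒟.P SymmForm.Metabolic (serreGen s) β h hP

/-- A noetherian abelian category: every object satisfies the ascending chain condition
on subobjects. -/
def NoethCat (A : Type u) [Category.{v} A] : Prop :=
  ∀ X : A, WellFounded ((· > ·) : Subobject X → Subobject X → Prop)

end Misc

/-!
The inclusion `j` maps `a^⊥_β = ker (D i ∘ β)` into `a^⊥_γ = ker (D (j ∘ i) ∘ γ)` over `a`,
and since this map is mono the square it forms with the two inclusions of `a` and `id_a` is a
pullback, so the induced map `j/a` of cokernels is mono. Both sides of the identity of forms
pull back along the epimorphism `a^⊥_β ↠ a^⊥_β / a` to the restriction of `γ` to `a^⊥_β`,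
and a form on a quotient is determined by its pullback because `D` sends epis to monos.
-/

namespace PreDuality

variable {A : Type u} [Category.{v} A] [Preadditive A] (𝒟 : PreDuality A)

lemma map_injective {X Y : A} {f g : X ⟶ Y} (h : 𝒟.map f = 𝒟.map g) : f = g := by
  have := 𝒟.χ_iso Y
  rw [← cancel_mono (𝒟.χ Y), 𝒟.χ_natural, 𝒟.χ_natural, h]

/-- `D` is faithful and `D ∘ D ≅ id` preserves epis. -/
lemma mono_map_of_epi {X Y : A} (e : X ⟶ Y) [Epi e] : Mono (𝒟.map e) where
  right_cancellation g h hgh := by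
    have := 𝒟.χ_iso Y
    have : Epi (𝒟.map (𝒟.map e)) := epi_of_epi_fac (𝒟.χ_natural e).symm
    apply 𝒟.map_injective
    rw [← cancel_epi (𝒟.map (𝒟.map e)), ← 𝒟.map_comp, ← 𝒟.map_comp, hgh]

lemma form_eq_of_epi {X Y : A} (e : X ⟶ Y) [Epi e] {φ ψ : Y ⟶ 𝒟.obj Y}
    (h : e ≫ φ ≫ 𝒟.map e = e ≫ ψ ≫ 𝒟.map e) : φ = ψ := by
  have := 𝒟.mono_map_of_epi e
  rw [← cancel_mono (𝒟.map e), ← cancel_epi e]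
  simpa only [Category.assoc] using h

end PreDuality

namespace SymmForm

section Restrict

variable {A : Type u} [Category.{v} A] [Preadditive A] {𝒟 : PreDuality A}

lemma restrict_restrict_form (β : SymmForm 𝒟) {a b : A} (g : b ⟶ β.carrier) (f : a ⟶ b) :
    ((β.restrict g).restrict f).form = (β.restrict (f ≫ g)).form := by
  change f ≫ (g ≫ β.form ≫ 𝒟.map g) ≫ 𝒟.map f = (f ≫ g) ≫ β.form ≫ 𝒟.map (f ≫ g)
  simp only [𝒟.map_comp, Category.assoc]

end Restrict

variable {A : Type u} [Category.{v} A] [Abelian A] {𝒟 : Duality A}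

section Reduce

variable (β : SymmForm 𝒟.P) {a : A} (i : a ⟶ β.carrier) (hiso : i ≫ β.form ≫ 𝒟.P.map i = 0)

lemma reduce_form_comp_map_π :
    (β.reduce i hiso).form ≫ 𝒟.P.map (cokernel.π (perpLift β i hiso)) = reducePre β i hiso :=
  (KernelFork.IsLimit.lift' (𝒟.dualCokernelIsKernel (perpLift β i hiso))
    (reducePre β i hiso) (reduce_h2 β i hiso)).2

lemma restrict_π_reduce_form :
    ((β.reduce i hiso).restrict (cokernel.π (perpLift β i hiso))).form
      = (β.restrict (kernel.ι (β.form ≫ 𝒟.P.map i))).form :=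
  (congrArg (cokernel.π _ ≫ ·) (reduce_form_comp_map_π β i hiso)).trans (cokernel.π_desc _ _ _)

end Reduce

variable (γ : SymmForm 𝒟.P) {b : A} (j : b ⟶ γ.carrier) {a : A} (i : a ⟶ b)

lemma restrict_form_comp_map :
    (γ.restrict j).form ≫ 𝒟.P.map i = j ≫ γ.form ≫ 𝒟.P.map (i ≫ j) := by
  change (j ≫ γ.form ≫ 𝒟.P.map j) ≫ 𝒟.P.map i = _
  simp only [𝒟.P.map_comp, Category.assoc]

/-- The inclusion `a^⊥_{γ|_j} ⟶ a^⊥_γ` of orthogonal complements, induced by `j`. -/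
noncomputable def perpRestrict :
    kernel ((γ.restrict j).form ≫ 𝒟.P.map i) ⟶ kernel (γ.form ≫ 𝒟.P.map (i ≫ j)) :=
  kernel.lift _ (kernel.ι _ ≫ j) ((Category.assoc _ _ _).trans
    ((congrArg (kernel.ι _ ≫ ·) (restrict_form_comp_map γ j i).symm).trans
      (kernel.condition _)))

lemma perpRestrict_ι :
    perpRestrict γ j i ≫ kernel.ι (γ.form ≫ 𝒟.P.map (i ≫ j))
      = kernel.ι ((γ.restrict j).form ≫ 𝒟.P.map i) ≫ j :=
  kernel.lift_ι _ _ _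

instance mono_perpRestrict [Mono j] : Mono (perpRestrict γ j i) :=
  have : Mono (kernel.ι ((γ.restrict j).form ≫ 𝒟.P.map i) ≫ j) := mono_comp' inferInstance ‹_›
  mono_of_mono_fac (perpRestrict_ι γ j i)

variable (hiso : i ≫ (γ.restrict j).form ≫ 𝒟.P.map i = 0)
  (hiso' : (i ≫ j) ≫ γ.form ≫ 𝒟.P.map (i ≫ j) = 0)

lemma perpLift_perpRestrict :
    perpLift (γ.restrict j) i hiso ≫ perpRestrict γ j i = perpLift γ (i ≫ j) hiso' := by
  rw [← cancel_mono (kernel.ι _), Category.assoc, perpRestrict_ι, perpLift_ι]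
  exact (Category.assoc _ _ _).symm.trans (congrArg (· ≫ j) (perpLift_ι (γ.restrict j) i hiso))

/-- The map `j/a : a^⊥_{γ|_j}/a ⟶ a^⊥_γ/a` between the isotropic reductions. -/
noncomputable def reduceRestrict :
    ((γ.restrict j).reduce i hiso).carrier ⟶ (γ.reduce (i ≫ j) hiso').carrier :=
  cokernel.map _ _ (𝟙 a) (perpRestrict γ j i)
    (by rw [Category.id_comp, perpLift_perpRestrict γ j i hiso hiso'])

lemma π_reduceRestrict :
    cokernel.π (perpLift (γ.restrict j) i hiso) ≫ reduceRestrict γ j i hiso hiso'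
      = perpRestrict γ j i ≫ cokernel.π (perpLift γ (i ≫ j) hiso') :=
  cokernel.π_desc _ _ _

lemma mono_reduceRestrict [Mono j] : Mono (reduceRestrict γ j i hiso hiso') :=
  Abelian.mono_cokernel_map_of_isPullback (IsPullback.of_vert_isIso_mono
    ⟨by rw [Category.id_comp, perpLift_perpRestrict γ j i hiso hiso']⟩)

lemma reduce_restrict_form :
    ((γ.restrict j).reduce i hiso).form
      = ((γ.reduce (i ≫ j) hiso').restrict (reduceRestrict γ j i hiso hiso')).form := by
  set ιβ := kernel.ι ((γ.restrict j).form ≫ 𝒟.P.map i)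
  set ιγ := kernel.ι (γ.form ≫ 𝒟.P.map (i ≫ j))
  set u := perpRestrict γ j i
  set m := reduceRestrict γ j i hiso hiso'
  set πβ := cokernel.π (perpLift (γ.restrict j) i hiso)
  set πγ := cokernel.π (perpLift γ (i ≫ j) hiso')
  apply 𝒟.P.form_eq_of_epi πβ
  calc πβ ≫ ((γ.restrict j).reduce i hiso).form ≫ 𝒟.P.map πβ
      = ιβ ≫ (γ.restrict j).form ≫ 𝒟.P.map ιβ := restrict_π_reduce_form (γ.restrict j) i hiso
    _ = (ιβ ≫ j) ≫ γ.form ≫ 𝒟.P.map (ιβ ≫ j) := restrict_restrict_form γ j ιβ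
    _ = (u ≫ ιγ) ≫ γ.form ≫ 𝒟.P.map (u ≫ ιγ) := by rw [perpRestrict_ι]
    _ = u ≫ (ιγ ≫ γ.form ≫ 𝒟.P.map ιγ) ≫ 𝒟.P.map u := (restrict_restrict_form γ ιγ u).symm
    _ = u ≫ (πγ ≫ (γ.reduce (i ≫ j) hiso').form ≫ 𝒟.P.map πγ) ≫ 𝒟.P.map u :=
        congrArg (fun φ => u ≫ φ ≫ 𝒟.P.map u) (restrict_π_reduce_form γ (i ≫ j) hiso').symm
    _ = (u ≫ πγ) ≫ (γ.reduce (i ≫ j) hiso').form ≫ 𝒟.P.map (u ≫ πγ) :=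
        restrict_restrict_form (γ.reduce (i ≫ j) hiso') πγ u
    _ = (πβ ≫ m) ≫ (γ.reduce (i ≫ j) hiso').form ≫ 𝒟.P.map (πβ ≫ m) :=
        congrArg (fun f => f ≫ (γ.reduce (i ≫ j) hiso').form ≫ 𝒟.P.map f)
          (π_reduceRestrict γ j i hiso hiso').symm
    _ = πβ ≫ (m ≫ (γ.reduce (i ≫ j) hiso').form ≫ 𝒟.P.map m) ≫ 𝒟.P.map πβ :=
        (restrict_restrict_form (γ.reduce (i ≫ j) hiso') m πβ).symm

end SymmForm

theorem stmt_2_general {A : Type u} [Category.{v} A] [Abelian A] (𝒟 : Duality A)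
    (γ : SymmForm 𝒟.P) {b : A} (j : b ⟶ γ.carrier) (hj : Mono j)
    {a : A} (i : a ⟶ b)
    (hiso : i ≫ (γ.restrict j).form ≫ 𝒟.P.map i = 0)
    (hiso' : (i ≫ j) ≫ γ.form ≫ 𝒟.P.map (i ≫ j) = 0) :
    ∃ m : ((γ.restrict j).reduce i hiso).carrier ⟶ (γ.reduce (i ≫ j) hiso').carrier,
      Mono m ∧
        ((γ.restrict j).reduce i hiso).form
          = m ≫ (γ.reduce (i ≫ j) hiso').form ≫ 𝒟.P.map m :=
  ⟨SymmForm.reduceRestrict γ j i hiso hiso', SymmForm.mono_reduceRestrict γ j i hiso hiso',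
    SymmForm.reduce_restrict_form γ j i hiso hiso'⟩

theorem stmt_2 {A : Type u} [Category.{v} A] [Abelian A] (𝒟 : Duality A)
    (γ : SymmForm 𝒟.P) {b : A} (j : b ⟶ γ.carrier) (hj : Mono j)
    {a : A} (i : a ⟶ b) (hi : Mono i)
    (hiso : i ≫ (γ.restrict j).form ≫ 𝒟.P.map i = 0)
    (hiso' : (i ≫ j) ≫ γ.form ≫ 𝒟.P.map (i ≫ j) = 0) :
    ∃ m : ((γ.restrict j).reduce i hiso).carrier ⟶ (γ.reduce (i ≫ j) hiso').carrier,
      Mono m ∧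
        ((γ.restrict j).reduce i hiso).form
          = m ≫ (γ.reduce (i ≫ j) hiso').form ≫ 𝒟.P.map m :=
  stmt_2_general 𝒟 γ j hj i hiso hiso'
end

section
/- Let (A, D, χ) be an abelian category with exact duality, β : b → Db a symmetric form, and i : a ↪ b an isotropic subobject for β. Let ā denote the image of the composite a ↪ b ↠ im β. Then there is an isometry overline(β/a) ≅ (β̄)/ā; that is, the non-degenerate form induced on the image of the isotropic reduction β/a is isometric to the isotropic reduction of the non-degenerate form β̄ on im β by the isotropic subobject ā. -/
open CategoryTheory CategoryTheory.Limits

universe v u v₁ u₁ v₂ u₂ v₃ u₃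

/-!
Both forms are quotients of the restriction `σ` of `β` to `a^⊥ = ker (D i ∘ β)`: the form
`overline(β/a)` along `a^⊥ ↠ a^⊥/a ↠ im (β/a)`, and `β̄/ā` along `a^⊥ ↠ ā^⊥ ↠ ā^⊥/ā`, where
`a^⊥ ↠ ā^⊥` is induced by `b ↠ im β` (it is onto because `a^⊥` is the preimage of `ā^⊥`).
Two epimorphisms out of `a^⊥` through which `σ` descends, and whose kernels are both `ker σ`,
present the same quotient, and the descended forms are isometric. For the first quotient the
kernel is `ker σ` because `D` turns epimorphisms into monomorphisms. For the second one needs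
`(a^⊥)^⊥ ⊆ a + ker β`, which comes from exactness of `D` applied to `a^⊥ ↪ b → D a`:
`ker (D ι) = im (D (D i ∘ β)) = β(a)`.
-/

namespace Duality

variable {A : Type u} [Category.{v} A] [Abelian A] (𝒟 : Duality A)

instance mono_map_of_epi {X Y : A} (f : X ⟶ Y) [Epi f] : Mono (𝒟.P.map f) := by
  refine Preadditive.mono_of_cancel_zero _ fun u hu => ?_
  obtain ⟨l, hl⟩ := KernelFork.IsLimit.lift' (𝒟.dualCokernelIsKernel f) u hu
  simp [← hl, cokernel.π_of_epi, PreDuality.map_zero]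

lemma exact_map_map_kernel_ι {X Y : A} (f : X ⟶ Y) :
    (ShortComplex.mk (𝒟.P.map f) (𝒟.P.map (kernel.ι f))
      (by rw [← 𝒟.P.map_comp, kernel.condition, 𝒟.P.map_zero])).Exact :=
  ShortComplex.exact_of_g_is_cokernel _ (𝒟.dualKernelIsCokernel f)

end Duality

namespace SymmForm

variable {A : Type u} [Category.{v} A] [Abelian A] {𝒟 : Duality A} (β : SymmForm 𝒟.P)

lemma comp_form_eq_χ_comp_map {a : A} (i : a ⟶ β.carrier) :
    i ≫ β.form = 𝒟.P.χ a ≫ 𝒟.P.map (β.form ≫ 𝒟.P.map i) := by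
  conv_lhs => rw [β.symm]
  rw [← Category.assoc, 𝒟.P.χ_natural i, Category.assoc, ← 𝒟.P.map_comp]

section Reduce

variable {a : A} (i : a ⟶ β.carrier) (hiso : i ≫ β.form ≫ 𝒟.P.map i = 0)

noncomputable def reduceπ : kernel (β.form ≫ 𝒟.P.map i) ⟶ (β.reduce i hiso).carrier :=
  cokernel.π (β.perpLift i hiso)

instance : Epi (β.reduceπ i hiso) := inferInstanceAs (Epi (cokernel.π _))

lemma perpLift_reduceπ : β.perpLift i hiso ≫ β.reduceπ i hiso = 0 :=
  cokernel.condition _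

lemma exact_perpLift_reduceπ : (ShortComplex.mk _ _ (β.perpLift_reduceπ i hiso)).Exact :=
  ShortComplex.exact_cokernel _

lemma reduceπ_form_spec :
    β.reduceπ i hiso ≫ (β.reduce i hiso).form ≫ 𝒟.P.map (β.reduceπ i hiso) =
      kernel.ι (β.form ≫ 𝒟.P.map i) ≫ β.form ≫
        𝒟.P.map (kernel.ι (β.form ≫ 𝒟.P.map i)) := by
  have h := (KernelFork.IsLimit.lift' (𝒟.dualCokernelIsKernel (β.perpLift i hiso))
    (reducePre β i hiso) (reduce_h2 β i hiso)).2
  exact (cokernel.π _ ≫= h).trans (cokernel.π_desc _ _ _)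

end Reduce

lemma kernel_ι_comp_form_comp_map_kernel_ι :
    kernel.ι β.form ≫ β.form ≫ 𝒟.P.map (kernel.ι β.form) = 0 := by
  rw [kernel.condition_assoc, zero_comp]

noncomputable def toPerpKernel : β.carrier ⟶ kernel (β.form ≫ 𝒟.P.map (kernel.ι β.form)) :=
  kernel.lift _ (𝟙 _) (by simpa using β.form_comp_map_kernel)

lemma toPerpKernel_ι : β.toPerpKernel ≫ kernel.ι (β.form ≫ 𝒟.P.map (kernel.ι β.form)) = 𝟙 _ :=
  kernel.lift_ι _ _ _

lemma kerQuot_eq :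
    β.kerQuot = β.toPerpKernel ≫
      β.reduceπ (kernel.ι β.form) β.kernel_ι_comp_form_comp_map_kernel_ι :=
  rfl

lemma reduceKernel_form_spec :
    β.kerQuot ≫ β.reduceKernel.form ≫ 𝒟.P.map β.kerQuot = β.form := by
  rw [kerQuot_eq]
  delta reduceKernel
  simp only [𝒟.P.map_comp, Category.assoc]
  rw [reassoc_of% (β.reduceπ_form_spec _ _), reassoc_of% β.toPerpKernel_ι, ← 𝒟.P.map_comp,
    toPerpKernel_ι, 𝒟.P.map_id, Category.comp_id]

instance epi_kerQuot : Epi β.kerQuot := by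
  have : IsSplitEpi β.toPerpKernel := ⟨⟨⟨kernel.ι _, by ext; simp [toPerpKernel]⟩⟩⟩
  rw [kerQuot_eq]
  delta reduceKernel
  exact epi_comp _ _

lemma kernel_ι_comp_kerQuot : kernel.ι β.form ≫ β.kerQuot = 0 := by
  have h : kernel.ι β.form ≫ β.toPerpKernel =
      β.perpLift (kernel.ι β.form) β.kernel_ι_comp_form_comp_map_kernel_ι := by
    ext; simp [toPerpKernel, perpLift_ι]
  rw [kerQuot_eq]
  delta reduceKernel
  rw [reassoc_of% h, perpLift_reduceπ]

lemma comp_kerQuot_eq_zero_iff {Z : A} (g : Z ⟶ β.carrier) :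
    g ≫ β.kerQuot = 0 ↔ g ≫ β.form = 0 := by
  refine ⟨fun h => ?_, fun h => ?_⟩
  · rw [← β.reduceKernel_form_spec, reassoc_of% h, zero_comp]
  · rw [← kernel.lift_ι β.form g h, Category.assoc, kernel_ι_comp_kerQuot, comp_zero]

lemma comp_comp_kerQuot_eq_zero_iff {s Z : A} (q : s ⟶ β.carrier) [Epi q] (g : Z ⟶ s) :
    g ≫ q ≫ β.kerQuot = 0 ↔ g ≫ q ≫ β.form ≫ 𝒟.P.map q = 0 := by
  rw [← Category.assoc, comp_kerQuot_eq_zero_iff, ← cancel_mono (𝒟.P.map q)]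
  simp only [Category.assoc, zero_comp]

lemma form_comp_map_eq_kerQuot_comp {a : A} (f : a ⟶ β.carrier) :
    β.form ≫ 𝒟.P.map f =
      β.kerQuot ≫ β.reduceKernel.form ≫ 𝒟.P.map (f ≫ β.kerQuot) := by
  rw [𝒟.P.map_comp, reassoc_of% β.reduceKernel_form_spec]

section ReduceKernel

variable {a : A} (i : a ⟶ β.carrier) (hiso : i ≫ β.form ≫ 𝒟.P.map i = 0)

lemma reduceπ_kerQuot_form_spec :
    (β.reduceπ i hiso ≫ (β.reduce i hiso).kerQuot) ≫ (β.reduce i hiso).reduceKernel.form ≫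
        𝒟.P.map (β.reduceπ i hiso ≫ (β.reduce i hiso).kerQuot) =
      kernel.ι (β.form ≫ 𝒟.P.map i) ≫ β.form ≫
        𝒟.P.map (kernel.ι (β.form ≫ 𝒟.P.map i)) := by
  rw [𝒟.P.map_comp, Category.assoc, reassoc_of% (β.reduce i hiso).reduceKernel_form_spec,
    reduceπ_form_spec]

lemma comp_reduceπ_kerQuot_eq_zero_iff {Z : A} (g : Z ⟶ kernel (β.form ≫ 𝒟.P.map i)) :
    g ≫ β.reduceπ i hiso ≫ (β.reduce i hiso).kerQuot = 0 ↔
      g ≫ kernel.ι (β.form ≫ 𝒟.P.map i) ≫ β.form ≫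
        𝒟.P.map (kernel.ι (β.form ≫ 𝒟.P.map i)) = 0 := by
  rw [comp_comp_kerQuot_eq_zero_iff, reduceπ_form_spec]

end ReduceKernel

section CommutingReductions

variable {a : A} (i : a ⟶ β.carrier)

lemma form_comp_map_eq_kerQuot_comp_image :
    β.form ≫ 𝒟.P.map i = β.kerQuot ≫ β.reduceKernel.form ≫
      𝒟.P.map (image.ι (i ≫ β.kerQuot)) ≫ 𝒟.P.map (factorThruImage (i ≫ β.kerQuot)) := by
  rw [form_comp_map_eq_kerQuot_comp, ← 𝒟.P.map_comp, image.fac]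

noncomputable def perpKerQuot : kernel (β.form ≫ 𝒟.P.map i) ⟶
    kernel (β.reduceKernel.form ≫ 𝒟.P.map (image.ι (i ≫ β.kerQuot))) :=
  kernel.lift _ (kernel.ι (β.form ≫ 𝒟.P.map i) ≫ β.kerQuot) (by
    rw [← cancel_mono (𝒟.P.map (factorThruImage (i ≫ β.kerQuot))), zero_comp]
    simp only [Category.assoc]
    rw [← form_comp_map_eq_kerQuot_comp_image, kernel.condition])

lemma perpKerQuot_ι : β.perpKerQuot i ≫
    kernel.ι (β.reduceKernel.form ≫ 𝒟.P.map (image.ι (i ≫ β.kerQuot))) =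
      kernel.ι (β.form ≫ 𝒟.P.map i) ≫ β.kerQuot :=
  kernel.lift_ι _ _ _

instance epi_perpKerQuot : Epi (β.perpKerQuot i) := by
  rw [epi_iff_surjective_up_to_refinements]
  intro Z x
  obtain ⟨Z', π, hπ, y, hy⟩ := surjective_up_to_refinements_of_epi β.kerQuot
    (x ≫ kernel.ι (β.reduceKernel.form ≫ 𝒟.P.map (image.ι (i ≫ β.kerQuot))))
  have hy' : y ≫ β.form ≫ 𝒟.P.map i = 0 := by
    rw [form_comp_map_eq_kerQuot_comp_image, ← reassoc_of% hy, reassoc_of%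
      (kernel.condition (β.reduceKernel.form ≫ 𝒟.P.map (image.ι (i ≫ β.kerQuot)))),
      zero_comp, comp_zero, comp_zero]
  refine ⟨Z', π, hπ, kernel.lift _ y hy', ?_⟩
  rw [← cancel_mono (kernel.ι _), Category.assoc, hy, Category.assoc, perpKerQuot_ι,
    kernel.lift_ι_assoc]

lemma perpKerQuot_form_spec :
    β.perpKerQuot i ≫ kernel.ι (β.reduceKernel.form ≫ 𝒟.P.map (image.ι (i ≫ β.kerQuot))) ≫
        β.reduceKernel.form ≫
          𝒟.P.map (kernel.ι (β.reduceKernel.form ≫ 𝒟.P.map (image.ι (i ≫ β.kerQuot)))) ≫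
            𝒟.P.map (β.perpKerQuot i) =
      kernel.ι (β.form ≫ 𝒟.P.map i) ≫ β.form ≫
        𝒟.P.map (kernel.ι (β.form ≫ 𝒟.P.map i)) := by
  rw [form_comp_map_eq_kerQuot_comp _ (kernel.ι (β.form ≫ 𝒟.P.map i)), ← perpKerQuot_ι,
    𝒟.P.map_comp, ← reassoc_of% (β.perpKerQuot_ι i)]

-- `(a^⊥)^⊥ ⊆ a + ker β`, read in `im β` and up to refinement.
lemma exists_comp_kerQuot_eq_of_orthogonal_perp {Z : A} (x : Z ⟶ β.carrier)
    (hx : x ≫ β.form ≫ 𝒟.P.map (kernel.ι (β.form ≫ 𝒟.P.map i)) = 0) :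
    ∃ (Z' : A) (π : Z' ⟶ Z) (_ : Epi π) (y : Z' ⟶ a),
      π ≫ x ≫ β.kerQuot = y ≫ i ≫ β.kerQuot := by
  obtain ⟨Z', π, hπ, x₁, hx₁⟩ :=
    (𝒟.exact_map_map_kernel_ι (β.form ≫ 𝒟.P.map i)).exact_up_to_refinements
      (x ≫ β.form) (by simpa using hx)
  have := 𝒟.P.χ_iso a
  refine ⟨Z', π, hπ, x₁ ≫ inv (𝒟.P.χ a), ?_⟩
  rw [← sub_eq_zero, ← Category.assoc, ← Category.assoc, ← Preadditive.sub_comp,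
    comp_kerQuot_eq_zero_iff, Preadditive.sub_comp, sub_eq_zero, Category.assoc, hx₁,
    Category.assoc, Category.assoc, comp_form_eq_χ_comp_map, IsIso.inv_hom_id_assoc]

variable (hiso' : image.ι (i ≫ β.kerQuot) ≫ β.reduceKernel.form ≫
    𝒟.P.map (image.ι (i ≫ β.kerQuot)) = 0)

lemma perpKerQuot_reduceπ_form_spec :
    (β.perpKerQuot i ≫ β.reduceKernel.reduceπ _ hiso') ≫ (β.reduceKernel.reduce _ hiso').form ≫
        𝒟.P.map (β.perpKerQuot i ≫ β.reduceKernel.reduceπ _ hiso') =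
      kernel.ι (β.form ≫ 𝒟.P.map i) ≫ β.form ≫
        𝒟.P.map (kernel.ι (β.form ≫ 𝒟.P.map i)) := by
  rw [𝒟.P.map_comp, Category.assoc, reassoc_of% (β.reduceKernel.reduceπ_form_spec _ hiso'),
    perpKerQuot_form_spec]

lemma comp_perpKerQuot_reduceπ_eq_zero_iff {Z : A} (g : Z ⟶ kernel (β.form ≫ 𝒟.P.map i)) :
    g ≫ β.perpKerQuot i ≫ β.reduceKernel.reduceπ _ hiso' = 0 ↔
      g ≫ kernel.ι (β.form ≫ 𝒟.P.map i) ≫ β.form ≫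
        𝒟.P.map (kernel.ι (β.form ≫ 𝒟.P.map i)) = 0 := by
  constructor
  · intro h
    obtain ⟨Z', π, hπ, z, hz⟩ :=
      (β.reduceKernel.exact_perpLift_reduceπ _ hiso').exact_up_to_refinements
        (g ≫ β.perpKerQuot i) (by simpa using h)
    rw [← cancel_epi π, comp_zero, ← β.perpKerQuot_form_spec i, reassoc_of% hz,
      reassoc_of% (β.reduceKernel.reduce_h1 _ hiso'), zero_comp, comp_zero]
  · intro h
    obtain ⟨Z', π, hπ, y, hy⟩ := β.exists_comp_kerQuot_eq_of_orthogonal_perp i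
      (g ≫ kernel.ι (β.form ≫ 𝒟.P.map i)) (by simpa using h)
    have hlift : π ≫ g ≫ β.perpKerQuot i =
        (y ≫ factorThruImage (i ≫ β.kerQuot)) ≫ β.reduceKernel.perpLift _ hiso' := by
      rw [← cancel_mono (kernel.ι _)]
      simp only [Category.assoc] at hy
      simp [perpKerQuot_ι, perpLift_ι, hy]
    rw [← cancel_epi π, comp_zero, reassoc_of% hlift, perpLift_reduceπ, comp_zero, comp_zero]

end CommutingReductions

end SymmForm

lemma Isometric'.of_epi {A : Type u} [Category.{v} A] [Abelian A] {𝒟 : Duality A}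
    {γ₁ γ₂ : SymmForm 𝒟.P} {s : A} {σ : s ⟶ 𝒟.P.obj s}
    (q₁ : s ⟶ γ₁.carrier) (q₂ : s ⟶ γ₂.carrier) [Epi q₁] [Epi q₂]
    (h₁ : q₁ ≫ γ₁.form ≫ 𝒟.P.map q₁ = σ) (h₂ : q₂ ≫ γ₂.form ≫ 𝒟.P.map q₂ = σ)
    (hker₁ : ∀ {Z : A} (g : Z ⟶ s), g ≫ q₁ = 0 ↔ g ≫ σ = 0)
    (hker₂ : ∀ {Z : A} (g : Z ⟶ s), g ≫ q₂ = 0 ↔ g ≫ σ = 0) :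
    Isometric' γ₁ γ₂ := by
  have hk₁ : kernel.ι q₁ ≫ q₂ = 0 := (hker₂ _).2 ((hker₁ _).1 (kernel.condition q₁))
  have hk₂ : kernel.ι q₂ ≫ q₁ = 0 := (hker₁ _).2 ((hker₂ _).1 (kernel.condition q₂))
  have hf := Abelian.comp_epiDesc q₁ q₂ hk₁
  have hf' := Abelian.comp_epiDesc q₂ q₁ hk₂
  refine ⟨Abelian.epiDesc q₁ q₂ hk₁, ⟨Abelian.epiDesc q₂ q₁ hk₂, ?_, ?_⟩, ?_⟩
  · rw [← cancel_epi q₁, reassoc_of% hf, hf', Category.comp_id]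
  · rw [← cancel_epi q₂, reassoc_of% hf', hf, Category.comp_id]
  · rw [← cancel_epi q₁, ← cancel_mono (𝒟.P.map q₁)]
    simp only [Category.assoc, ← 𝒟.P.map_comp, reassoc_of% hf, hf, h₁, h₂]

theorem stmt_3_general {A : Type u} [Category.{v} A] [Abelian A] (𝒟 : Duality A)
    (β : SymmForm 𝒟.P) {a : A} (i : a ⟶ β.carrier)
    (hiso : i ≫ β.form ≫ 𝒟.P.map i = 0)
    -- `ā = im (a ↪ b ↠ im β)` is an isotropic subobject of `β̄`:
    (hiso' : Limits.image.ι (i ≫ β.kerQuot) ≫ β.reduceKernel.form ≫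
        𝒟.P.map (Limits.image.ι (i ≫ β.kerQuot)) = 0) :
    Isometric' ((β.reduce i hiso).reduceKernel)
      (β.reduceKernel.reduce (Limits.image.ι (i ≫ β.kerQuot)) hiso') :=
  Isometric'.of_epi _ _ (β.reduceπ_kerQuot_form_spec i hiso)
    (β.perpKerQuot_reduceπ_form_spec i hiso') (β.comp_reduceπ_kerQuot_eq_zero_iff i hiso)
    (β.comp_perpKerQuot_reduceπ_eq_zero_iff i hiso')

theorem stmt_3 {A : Type u} [Category.{v} A] [Abelian A] (𝒟 : Duality A)
    (β : SymmForm 𝒟.P) {a : A} (i : a ⟶ β.carrier) (hi : Mono i)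
    (hiso : i ≫ β.form ≫ 𝒟.P.map i = 0)
    -- `ā = im (a ↪ b ↠ im β)` is an isotropic subobject of `β̄`:
    (hiso' : Limits.image.ι (i ≫ β.kerQuot) ≫ β.reduceKernel.form ≫
        𝒟.P.map (Limits.image.ι (i ≫ β.kerQuot)) = 0) :
    Isometric' ((β.reduce i hiso).reduceKernel)
      (β.reduceKernel.reduce (Limits.image.ι (i ≫ β.kerQuot)) hiso') :=
  stmt_3_general 𝒟 β i hiso hiso'
end

section
/- Let (A, D, χ) be an abelian category with exact duality, γ : c → Dc a symmetric form, and a ↪ c an isotropic subobject. Then taking the quotient by a induces a one-to-one correspondence between factorisations a ↪ b ↪ c with b isotropic for γ and isotropic subobjects of the reduced form γ/a; moreover for any such b there is an isometry γ/b ≅ (γ/a)/(b/a). -/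
open CategoryTheory CategoryTheory.Limits

universe v u v₁ u₁ v₂ u₂ v₃ u₃

/-
Write `q : a^⊥ ⟶ a^⊥/a` for the quotient map and `ι : a^⊥ ⟶ c` for the inclusion. By
construction of `γ/a`, pulling `γ/a` back along `q` gives `γ` restricted along `ι`; since `q` is
epi and `D` turns epis into monos, isotropy and orthogonality in `γ/a` can be tested in `c`.
A subobject `a ⊆ b ⊆ a^⊥` is recovered from its image `b/a` as the preimage `q⁻¹(b/a)`, because
`ker q = a ⊆ b`; this gives injectivity, and preimages of isotropic subobjects of `γ/a` give
surjectivity. For the isometry, `b^⊥ = q⁻¹((b/a)^⊥)`, so `q` restricts to an epi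
`b^⊥ ⟶ (b/a)^⊥` with kernel `a ⊆ b` under which `b` is the preimage of `b/a`; hence it induces
an isomorphism `b^⊥/b ≅ (b/a)^⊥/(b/a)`, which respects the forms.
-/

namespace CategoryTheory

lemma IsPullback.of_forall_exists_lift {A : Type u} [Category.{v} A] {B K W Q : A}
    (r : B ⟶ K) [Mono r] (w : B ⟶ W) (q : K ⟶ Q) (κ : W ⟶ Q) [Mono κ] (sq : r ≫ q = w ≫ κ)
    (lift : ∀ {X : A} (f : X ⟶ K) (g : X ⟶ W), f ≫ q = g ≫ κ → ∃ t : X ⟶ B, t ≫ r = f) :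
    IsPullback r w q κ := by
  choose t ht using fun s : PullbackCone q κ => lift s.fst s.snd s.condition
  refine IsPullback.of_isLimit (PullbackCone.IsLimit.mk sq t ht (fun s => ?_) fun s m hm _ => ?_)
  · rw [← cancel_mono κ, Category.assoc, ← sq, reassoc_of% (ht s), s.condition]
  · rw [← cancel_mono r, hm, ht]

namespace Abelian

variable {A : Type u} [Category.{v} A] [Abelian A]

lemma comp_cokernel_π_eq_zero_of_comp_eq {B K T Q X : A} (ℓ : B ⟶ K) (q : K ⟶ Q)
    (e : B ⟶ T) [Epi e] (m : T ⟶ Q) (sq : ℓ ≫ q = e ≫ m)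
    (hker : kernel.ι q ≫ cokernel.π ℓ = 0) (f : X ⟶ K) (g : X ⟶ T) (h : f ≫ q = g ≫ m) :
    f ≫ cokernel.π ℓ = 0 := by
  obtain ⟨X', π, _, x, hx⟩ := surjective_up_to_refinements_of_epi e g
  have hq : (π ≫ f - x ≫ ℓ) ≫ q = 0 := by
    rw [Preadditive.sub_comp, Category.assoc, Category.assoc, h, sq, reassoc_of% hx, sub_self]
  rw [← cancel_epi π, comp_zero]
  calc π ≫ f ≫ cokernel.π ℓ = (π ≫ f - x ≫ ℓ) ≫ cokernel.π ℓ := by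
        simp only [Preadditive.sub_comp, Category.assoc, cokernel.condition, comp_zero, sub_zero]
    _ = kernel.lift q _ hq ≫ kernel.ι q ≫ cokernel.π ℓ := by rw [kernel.lift_ι_assoc]
    _ = 0 := by rw [hker, comp_zero]

lemma isPullback_of_kernel_ι_comp_cokernel_π_eq_zero {B K T Q : A} (ℓ : B ⟶ K) [Mono ℓ]
    (e : B ⟶ T) [Epi e] (q : K ⟶ Q) (m : T ⟶ Q) [Mono m] (sq : ℓ ≫ q = e ≫ m)
    (hker : kernel.ι q ≫ cokernel.π ℓ = 0) : IsPullback ℓ e q m :=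
  IsPullback.of_forall_exists_lift ℓ e q m sq fun f g h =>
    ⟨monoLift ℓ f (comp_cokernel_π_eq_zero_of_comp_eq ℓ q e m sq hker f g h), monoLift_comp _ _ _⟩

lemma kernel_ι_cokernel_π_comp_cokernel_π_eq_zero {a B K : A} (p : a ⟶ K) [Mono p]
    (i' : a ⟶ B) (ℓ : B ⟶ K) (hp : i' ≫ ℓ = p) : kernel.ι (cokernel.π p) ≫ cokernel.π ℓ = 0 := by
  subst hp
  rw [← monoLift_comp (i' ≫ ℓ) (kernel.ι _) (kernel.condition _), Category.assoc, Category.assoc,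
    cokernel.condition, comp_zero, comp_zero]

end Abelian

end CategoryTheory

instance Duality.mono_map_of_epi_s4 {A : Type u} [Category.{v} A] [Abelian A] (𝒟 : Duality A)
    {X Y : A} (f : X ⟶ Y) [Epi f] : Mono (𝒟.P.map f) := by
  refine Preadditive.mono_of_cancel_zero _ fun g hg => ?_
  obtain ⟨h, hh⟩ := KernelFork.IsLimit.lift' (𝒟.dualCokernelIsKernel f) g hg
  have hπ : 𝒟.P.map (cokernel.π f) = 0 := by rw [cokernel.π_of_epi, 𝒟.P.map_zero]
  calc g = h ≫ 𝒟.P.map (cokernel.π f) := hh.symm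
    _ = 0 := by simp only [hπ, comp_zero]

-- So that `rw` identifies `(β.reduce i hiso).carrier` with `cokernel (β.perpLift i hiso)`.
attribute [reducible] SymmForm.reduce

namespace SymmForm

variable {A : Type u} [Category.{v} A] [Abelian A] {𝒟 : Duality A} (β : SymmForm 𝒟.P) {a : A}
  (i : a ⟶ β.carrier) (hiso : i ≫ β.form ≫ 𝒟.P.map i = 0)

instance mono_perpLift [Mono i] : Mono (β.perpLift i hiso) :=
  mono_of_mono_fac (β.perpLift_ι i hiso)

lemma reduce_form_fac :
    cokernel.π (β.perpLift i hiso) ≫ (β.reduce i hiso).form ≫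
        𝒟.P.map (cokernel.π (β.perpLift i hiso)) =
      kernel.ι (β.form ≫ 𝒟.P.map i) ≫ β.form ≫ 𝒟.P.map (kernel.ι (β.form ≫ 𝒟.P.map i)) := by
  have h : (β.reduce i hiso).form ≫ 𝒟.P.map (cokernel.π (β.perpLift i hiso)) =
      β.reducePre i hiso :=
    (KernelFork.IsLimit.lift' (𝒟.dualCokernelIsKernel (β.perpLift i hiso))
      (β.reducePre i hiso) (β.reduce_h2 i hiso)).2
  rw [h]
  exact cokernel.π_desc _ _ _

lemma comp_π_reduce_form_map_comp_π {X Y : A} (f : X ⟶ kernel (β.form ≫ 𝒟.P.map i))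
    (f' : Y ⟶ kernel (β.form ≫ 𝒟.P.map i)) :
    (f ≫ cokernel.π (β.perpLift i hiso)) ≫ (β.reduce i hiso).form ≫
        𝒟.P.map (f' ≫ cokernel.π (β.perpLift i hiso)) =
      (f ≫ kernel.ι _) ≫ β.form ≫ 𝒟.P.map (f' ≫ kernel.ι _) := by
  simp only [𝒟.P.map_comp, Category.assoc, reassoc_of% (β.reduce_form_fac i hiso)]

lemma isometric_reduce_of_isIso {δ : SymmForm 𝒟.P} (u : (β.reduce i hiso).carrier ⟶ δ.carrier)
    [IsIso u] (hu : (cokernel.π (β.perpLift i hiso) ≫ u) ≫ δ.form ≫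
        𝒟.P.map (cokernel.π (β.perpLift i hiso) ≫ u) =
      kernel.ι (β.form ≫ 𝒟.P.map i) ≫ β.form ≫ 𝒟.P.map (kernel.ι (β.form ≫ 𝒟.P.map i))) :
    Isometric' (β.reduce i hiso) δ := by
  refine ⟨u, inferInstance, ?_⟩
  rw [← cancel_epi (cokernel.π (β.perpLift i hiso)),
    ← cancel_mono (𝒟.P.map (cokernel.π (β.perpLift i hiso)))]
  simp only [𝒟.P.map_comp, Category.assoc] at hu ⊢
  rw [reduce_form_fac, hu]

variable {b : A} (k : b ⟶ β.carrier) (wk : k ≫ β.form ≫ 𝒟.P.map i = 0)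

lemma comp_π_orthogonal_imageι_iff {X : A} (f : X ⟶ kernel (β.form ≫ 𝒟.P.map i)) :
    (f ≫ cokernel.π (β.perpLift i hiso)) ≫ (β.reduce i hiso).form ≫
        𝒟.P.map (image.ι (kernel.lift (β.form ≫ 𝒟.P.map i) k wk ≫
          cokernel.π (β.perpLift i hiso))) = 0 ↔
      (f ≫ kernel.ι _) ≫ β.form ≫ 𝒟.P.map k = 0 := by
  rw [← cancel_mono (𝒟.P.map (factorThruImage (kernel.lift (β.form ≫ 𝒟.P.map i) k wk ≫
      cokernel.π (β.perpLift i hiso)))), zero_comp]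
  simp only [Category.assoc, ← 𝒟.P.map_comp, image.fac]
  rw [← Category.assoc, comp_π_reduce_form_map_comp_π, kernel.lift_ι, Category.assoc]

lemma imageι_isotropic_reduce_iff :
    image.ι (kernel.lift (β.form ≫ 𝒟.P.map i) k wk ≫ cokernel.π (β.perpLift i hiso)) ≫
        (β.reduce i hiso).form ≫ 𝒟.P.map (image.ι (kernel.lift (β.form ≫ 𝒟.P.map i) k wk ≫
          cokernel.π (β.perpLift i hiso))) = 0 ↔
      k ≫ β.form ≫ 𝒟.P.map k = 0 := by
  rw [← cancel_epi (factorThruImage (kernel.lift (β.form ≫ 𝒟.P.map i) k wk ≫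
      cokernel.π (β.perpLift i hiso))), comp_zero, ← Category.assoc, image.fac,
    comp_π_orthogonal_imageι_iff, kernel.lift_ι]

lemma exists_comp_eq_of_imageι_factors [Mono i] {b₁ b₂ : A} (k₁ : b₁ ⟶ β.carrier)
    (i₂ : a ⟶ b₂) (k₂ : b₂ ⟶ β.carrier) [Mono k₂] (hi₂ : i = i₂ ≫ k₂)
    (w₁ : k₁ ≫ β.form ≫ 𝒟.P.map i = 0) (w₂ : k₂ ≫ β.form ≫ 𝒟.P.map i = 0)
    (g : image (kernel.lift (β.form ≫ 𝒟.P.map i) k₁ w₁ ≫ cokernel.π (β.perpLift i hiso)) ⟶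
      image (kernel.lift (β.form ≫ 𝒟.P.map i) k₂ w₂ ≫ cokernel.π (β.perpLift i hiso)))
    (hg : g ≫ image.ι (kernel.lift (β.form ≫ 𝒟.P.map i) k₂ w₂ ≫
        cokernel.π (β.perpLift i hiso)) =
      image.ι (kernel.lift (β.form ≫ 𝒟.P.map i) k₁ w₁ ≫ cokernel.π (β.perpLift i hiso))) :
    ∃ t : b₁ ⟶ b₂, t ≫ k₂ = k₁ := by
  have hℓ₂ : i₂ ≫ kernel.lift _ k₂ w₂ = β.perpLift i hiso := by
    rw [← cancel_mono (kernel.ι _), Category.assoc, kernel.lift_ι, perpLift_ι, hi₂]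
  have h₁ : kernel.lift _ k₁ w₁ ≫ cokernel.π (kernel.lift _ k₂ w₂) = 0 :=
    Abelian.comp_cokernel_π_eq_zero_of_comp_eq _ _ _ _ (image.fac _).symm
      (Abelian.kernel_ι_cokernel_π_comp_cokernel_π_eq_zero _ i₂ _ hℓ₂) _
      (factorThruImage _ ≫ g) (by rw [Category.assoc, hg, image.fac])
  refine ⟨Abelian.monoLift _ _ h₁, ?_⟩
  simpa only [Category.assoc, kernel.lift_ι] using Abelian.monoLift_comp _ _ h₁ =≫ kernel.ι _

lemma exists_isotropic_of_isotropic_reduce {t : A}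
    (τ : t ⟶ (β.reduce i hiso).carrier) [Mono τ]
    (hτ : τ ≫ (β.reduce i hiso).form ≫ 𝒟.P.map τ = 0) :
    ∃ (b : A) (i' : a ⟶ b) (k : b ⟶ β.carrier) (_ : Mono k) (_ : i = i' ≫ k)
      (_ : k ≫ β.form ≫ 𝒟.P.map k = 0) (wk : k ≫ (β.form ≫ 𝒟.P.map i) = 0)
      (e : image (kernel.lift (β.form ≫ 𝒟.P.map i) k wk ≫ cokernel.π (β.perpLift i hiso)) ≅ t),
      e.hom ≫ τ = image.ι _ := by
  let q := cokernel.π (β.perpLift i hiso)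
  have hp : β.perpLift i hiso ≫ q = 0 ≫ τ := by rw [cokernel.condition, zero_comp]
  have wk : (pullback.fst q τ ≫ kernel.ι _) ≫ β.form ≫ 𝒟.P.map i = 0 := by
    rw [Category.assoc, kernel.condition, comp_zero]
  have hk : (pullback.fst q τ ≫ kernel.ι _) ≫ β.form ≫
      𝒟.P.map (pullback.fst q τ ≫ kernel.ι _) = 0 := by
    rw [← comp_π_reduce_form_map_comp_π β i hiso, pullback.condition, 𝒟.P.map_comp]
    simp only [Category.assoc]
    rw [reassoc_of% hτ, zero_comp, comp_zero]
  have hℓ : kernel.lift _ _ wk = pullback.fst q τ := by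
    rw [← cancel_mono (kernel.ι _), kernel.lift_ι]
  have hfac : pullback.snd q τ ≫ τ = kernel.lift _ _ wk ≫ q := by rw [hℓ, pullback.condition]
  have : StrongEpi (pullback.snd q τ) := strongEpi_of_epi _
  exact ⟨pullback q τ, pullback.lift (β.perpLift i hiso) 0 hp, pullback.fst q τ ≫ kernel.ι _,
    inferInstance, by rw [pullback.lift_fst_assoc, perpLift_ι], hk, wk,
    (image.isoStrongEpiMono _ _ hfac).symm, image.isoStrongEpiMono_inv_comp_mono _ _ hfac⟩

lemma isometric_reduce_reduce_imageι [Mono i] {b : A} (i' : a ⟶ b) (k : b ⟶ β.carrier)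
    [Mono k] (hi' : i = i' ≫ k) (hk : k ≫ β.form ≫ 𝒟.P.map k = 0)
    (wk : k ≫ β.form ≫ 𝒟.P.map i = 0)
    (hT : image.ι (kernel.lift (β.form ≫ 𝒟.P.map i) k wk ≫ cokernel.π (β.perpLift i hiso)) ≫
      (β.reduce i hiso).form ≫ 𝒟.P.map (image.ι (kernel.lift (β.form ≫ 𝒟.P.map i) k wk ≫
        cokernel.π (β.perpLift i hiso))) = 0) :
    Isometric' (β.reduce k hk) ((β.reduce i hiso).reduce
      (image.ι (kernel.lift (β.form ≫ 𝒟.P.map i) k wk ≫ cokernel.π (β.perpLift i hiso))) hT) := by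
  have hrk : kernel.ι (β.form ≫ 𝒟.P.map k) ≫ β.form ≫ 𝒟.P.map i = 0 := by
    rw [hi', 𝒟.P.map_comp, ← Category.assoc β.form, ← Category.assoc, kernel.condition, zero_comp]
  obtain ⟨r, hr⟩ : ∃ r, r ≫ kernel.ι (β.form ≫ 𝒟.P.map i) = kernel.ι (β.form ≫ 𝒟.P.map k) :=
    ⟨_, kernel.lift_ι _ _ hrk⟩
  have : Mono r := mono_of_mono_fac hr
  have hrT : (r ≫ cokernel.π (β.perpLift i hiso)) ≫ (β.reduce i hiso).form ≫
      𝒟.P.map (image.ι (kernel.lift _ k wk ≫ cokernel.π (β.perpLift i hiso))) = 0 :=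
    (comp_π_orthogonal_imageι_iff β i hiso k wk r).2 (by rw [hr, kernel.condition])
  obtain ⟨w, hw⟩ := (⟨_, kernel.lift_ι _ _ hrT⟩ : ∃ w, w ≫ kernel.ι _ = _)
  -- `b^⊥` is the preimage of `(b/a)^⊥` under `q`.
  have hpb : IsPullback r w (cokernel.π (β.perpLift i hiso)) (kernel.ι _) :=
    IsPullback.of_forall_exists_lift _ _ _ _ hw.symm fun f g h =>
      ⟨kernel.lift _ (f ≫ kernel.ι _) ((comp_π_orthogonal_imageι_iff β i hiso k wk f).1
        (by rw [h, Category.assoc, kernel.condition, comp_zero])), by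
          rw [← cancel_mono (kernel.ι _), Category.assoc, hr, kernel.lift_ι]⟩
  have : Epi w := Abelian.epi_snd_of_isLimit _ _ hpb.isLimit
  have hℓ : β.perpLift k hk ≫ r = kernel.lift _ k wk := by
    rw [← cancel_mono (kernel.ι _), Category.assoc, hr, perpLift_ι, kernel.lift_ι]
  have hsq : β.perpLift k hk ≫ w = factorThruImage _ ≫ (β.reduce i hiso).perpLift _ hT := by
    rw [← cancel_mono (kernel.ι _), Category.assoc, hw, reassoc_of% hℓ, Category.assoc,
      perpLift_ι, image.fac]
  -- The kernel of `w` lies in `a`, hence in `b`.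
  have hker : kernel.ι w ≫ cokernel.π (β.perpLift k hk) = 0 := by
    have h0 : (kernel.ι w ≫ r) ≫ cokernel.π (β.perpLift i hiso) = 0 := by
      rw [Category.assoc, ← hw, kernel.condition_assoc, zero_comp]
    have hpa : (i' ≫ β.perpLift k hk) ≫ r = β.perpLift i hiso := by
      rw [Category.assoc, hℓ, ← cancel_mono (kernel.ι _), Category.assoc, kernel.lift_ι,
        perpLift_ι, hi']
    have hs : kernel.ι w = Abelian.monoLift _ _ h0 ≫ i' ≫ β.perpLift k hk := by
      rw [← cancel_mono r, Category.assoc, hpa, Abelian.monoLift_comp]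
    rw [hs]
    simp only [Category.assoc, cokernel.condition, comp_zero]
  have : Mono (cokernel.map _ _ _ _ hsq) := Abelian.mono_cokernel_map_of_isPullback
    (Abelian.isPullback_of_kernel_ι_comp_cokernel_π_eq_zero _ _ _ _ hsq hker)
  have : Epi (cokernel.map _ _ _ _ hsq) := epi_of_epi_fac (cokernel.π_desc _ _ _)
  have : IsIso (cokernel.map _ _ _ _ hsq) := isIso_of_mono_of_epi _
  refine isometric_reduce_of_isIso β k hk (cokernel.map _ _ _ _ hsq) ?_
  rw [cokernel.π_desc, comp_π_reduce_form_map_comp_π, hw, comp_π_reduce_form_map_comp_π, hr]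

end SymmForm

theorem stmt_4 {A : Type u} [Category.{v} A] [Abelian A] (𝒟 : Duality A)
    (γ : SymmForm 𝒟.P) {a : A} (i : a ⟶ γ.carrier) (hi : Mono i)
    (hiso : i ≫ γ.form ≫ 𝒟.P.map i = 0) :
    -- (1) the forward map: an isotropic factorisation `a ↪ b ↪ c` induces, by quotienting
    -- by `a`, an isotropic subobject `b/a` of the reduction `γ/a`
    (∀ (b : A) (i' : a ⟶ b) (k : b ⟶ γ.carrier), Mono k → i = i' ≫ k →
      k ≫ γ.form ≫ 𝒟.P.map k = 0 →
      ∀ wk : k ≫ (γ.form ≫ 𝒟.P.map i) = 0,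
        Limits.image.ι (kernel.lift (γ.form ≫ 𝒟.P.map i) k wk ≫
              cokernel.π (γ.perpLift i hiso)) ≫
            (γ.reduce i hiso).form ≫
            𝒟.P.map (Limits.image.ι (kernel.lift (γ.form ≫ 𝒟.P.map i) k wk ≫
              cokernel.π (γ.perpLift i hiso))) = 0) ∧
    -- (2) injectivity: two isotropic factorisations inducing the same subobject of `γ/a`
    -- are the same subobject of `c`
    (∀ (b₁ : A) (i₁ : a ⟶ b₁) (k₁ : b₁ ⟶ γ.carrier) (_ : Mono k₁) (_ : i = i₁ ≫ k₁)
      (_ : k₁ ≫ γ.form ≫ 𝒟.P.map k₁ = 0) (w₁ : k₁ ≫ (γ.form ≫ 𝒟.P.map i) = 0)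
      (b₂ : A) (i₂ : a ⟶ b₂) (k₂ : b₂ ⟶ γ.carrier) (_ : Mono k₂) (_ : i = i₂ ≫ k₂)
      (_ : k₂ ≫ γ.form ≫ 𝒟.P.map k₂ = 0) (w₂ : k₂ ≫ (γ.form ≫ 𝒟.P.map i) = 0)
      (e : Limits.image (kernel.lift (γ.form ≫ 𝒟.P.map i) k₁ w₁ ≫
              cokernel.π (γ.perpLift i hiso)) ≅
           Limits.image (kernel.lift (γ.form ≫ 𝒟.P.map i) k₂ w₂ ≫
              cokernel.π (γ.perpLift i hiso))),
      e.hom ≫ Limits.image.ι _ = Limits.image.ι _ →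
      ∃ f : b₁ ≅ b₂, f.hom ≫ k₂ = k₁) ∧
    -- (3) surjectivity: every isotropic subobject of `γ/a` arises this way
    (∀ (t : A) (τ : t ⟶ (γ.reduce i hiso).carrier), Mono τ →
      τ ≫ (γ.reduce i hiso).form ≫ 𝒟.P.map τ = 0 →
      ∃ (b : A) (i' : a ⟶ b) (k : b ⟶ γ.carrier) (_ : Mono k) (_ : i = i' ≫ k)
        (_ : k ≫ γ.form ≫ 𝒟.P.map k = 0) (wk : k ≫ (γ.form ≫ 𝒟.P.map i) = 0)
        (e : Limits.image (kernel.lift (γ.form ≫ 𝒟.P.map i) k wk ≫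
              cokernel.π (γ.perpLift i hiso)) ≅ t),
        e.hom ≫ τ = Limits.image.ι _) ∧
    -- (4) reduction in stages: `γ/b ≅ (γ/a)/(b/a)`
    (∀ (b : A) (i' : a ⟶ b) (k : b ⟶ γ.carrier) (_ : Mono k) (_ : i = i' ≫ k)
      (hk : k ≫ γ.form ≫ 𝒟.P.map k = 0) (wk : k ≫ (γ.form ≫ 𝒟.P.map i) = 0)
      (hT : Limits.image.ι (kernel.lift (γ.form ≫ 𝒟.P.map i) k wk ≫
              cokernel.π (γ.perpLift i hiso)) ≫
            (γ.reduce i hiso).form ≫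
            𝒟.P.map (Limits.image.ι (kernel.lift (γ.form ≫ 𝒟.P.map i) k wk ≫
              cokernel.π (γ.perpLift i hiso))) = 0),
      Isometric' (γ.reduce k hk)
        ((γ.reduce i hiso).reduce
          (Limits.image.ι (kernel.lift (γ.form ≫ 𝒟.P.map i) k wk ≫
            cokernel.π (γ.perpLift i hiso))) hT)) := by
  refine ⟨fun b i' k _ _ hk wk => (γ.imageι_isotropic_reduce_iff i hiso k wk).2 hk,
    fun b₁ i₁ k₁ _ hi₁ _ w₁ b₂ i₂ k₂ _ hi₂ _ w₂ e he => ?_,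
    fun t τ _ hτ => γ.exists_isotropic_of_isotropic_reduce i hiso τ hτ,
    fun b i' k _ hi' hk wk hT => γ.isometric_reduce_reduce_imageι i hiso i' k hi' hk wk hT⟩
  obtain ⟨t, ht⟩ := γ.exists_comp_eq_of_imageι_factors i hiso k₁ i₂ k₂ hi₂ w₁ w₂ e.hom he
  obtain ⟨t', ht'⟩ := γ.exists_comp_eq_of_imageι_factors i hiso k₂ i₁ k₁ hi₁ w₂ w₁ e.inv
    (by rw [← he, e.inv_hom_id_assoc])
  refine ⟨⟨t, t', ?_, ?_⟩, ht⟩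
  · rw [← cancel_mono k₁, Category.assoc, ht', ht, Category.id_comp]
  · rw [← cancel_mono k₂, Category.assoc, ht, ht', Category.id_comp]
end
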